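/- Under the connectivity assumption (the measurement graph G is connected and at least one node has an anchor measurement, with all measured ranges finite), the cost F(z) = ½ψ_D(Bz) + ½ψ_R(Ez − α) restricted to the feasible set Z (where the auxiliary variables y_ij and w_ik are bounded by the ranges) is coercive in the position variables: F(z) → ∞ whenever ‖x‖ → ∞ with z ∈ Z. -/
import Mathlib


noncomputable def huber (δ t : ℝ) : ℝ := if |t| ≤ δ then t ^ 2 else 2 * δ * |t| - δ ^ 2

lemma huber_nonneg {δ t : ℝ} (hδ : 0 ≤ δ) : 0 ≤ huber δ t := by
  unfold huber
  split_ifs with h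
  · positivity
  · nlinarith [abs_nonneg t, le_of_not_ge h]

lemma huber_lb {δ t : ℝ} : 2 * δ * |t| - δ ^ 2 ≤ huber δ t := by
  unfold huber
  split_ifs with h
  · nlinarith [sq_abs t, sq_nonneg (|t| - δ)]
  · exact le_refl _

lemma walk_norm_bound {V : Type*} {X : Type*} [SeminormedAddCommGroup X]
    {G : SimpleGraph V} {f : V → X} {B : ℝ}
    (hB : ∀ u v, G.Adj u v → ‖f u - f v‖ ≤ B) :
    ∀ {u v : V} (w : G.Walk u v), ‖f u - f v‖ ≤ w.length * B := by
  intro u v w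
  induction w with
  | nil => simp
  | @cons a b c h w ih =>
    have h1 := hB _ _ h
    have hlen : ((SimpleGraph.Walk.cons h w).length : ℝ) = w.length + 1 := by
      simp [SimpleGraph.Walk.length_cons]
    have h2 : ‖f a - f c‖ ≤ ‖f a - f b‖ + ‖f b - f c‖ := by
      have := norm_add_le (f a - f b) (f b - f c)
      simpa using this
    rw [hlen]
    linarith

/-- Coercivity in the position variables of the robust localization cost, under
connectivity of the measurement graph and existence of an anchor measurement. -/
theorem cost_coercive (V ι : Type*) [Fintype V] [Fintype ι] (p : ℕ)
    (E : Finset (V × V)) (K : Finset (V × ι)) (hK : K.Nonempty)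
    (d D : V × V → ℝ) (r R : V × ι → ℝ) (a : ι → EuclideanSpace ℝ (Fin p))
    (hD : ∀ e ∈ E, 0 < D e) (hR : ∀ k ∈ K, 0 < R k)
    (hconn : (SimpleGraph.fromRel (fun i j : V => (i, j) ∈ E)).Connected)
    (F : (V → EuclideanSpace ℝ (Fin p)) → (V × V → EuclideanSpace ℝ (Fin p)) →
      (V × ι → EuclideanSpace ℝ (Fin p)) → ℝ)
    (hF : ∀ x y w, F x y w =
      (∑ e ∈ E, (1 / 2 : ℝ) * huber (D e) ‖x e.1 - x e.2 - y e‖) +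
        ∑ k ∈ K, (1 / 2 : ℝ) * huber (R k) ‖x k.1 - a k.2 - w k‖) :
    ∀ c : ℝ, ∃ N : ℝ, ∀ x y w,
      (∀ e ∈ E, ‖y e‖ ≤ d e) → (∀ k ∈ K, ‖w k‖ ≤ r k) → N ≤ ‖x‖ → c ≤ F x y w := by
  intro c
  classical
  obtain ⟨k0, hk0⟩ := hK
  set C : ℝ := max c 0 with hCdef
  have hC0 : 0 ≤ C := le_max_right _ _
  set B : ℝ := ∑ e ∈ E, ((C + (D e) ^ 2 / 2) / (D e) + |d e|) with hBdef
  have hBterm : ∀ e ∈ E, 0 ≤ (C + (D e) ^ 2 / 2) / (D e) + |d e| := by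
    intro e he
    have := hD e he
    positivity
  have hB0 : 0 ≤ B := Finset.sum_nonneg hBterm
  set A : ℝ := (C + (R k0) ^ 2 / 2) / (R k0) + |r k0| with hAdef
  have hA0 : 0 ≤ A := by have := hR k0 hk0; positivity
  refine ⟨‖a k0.2‖ + A + (Fintype.card V) * B + 1, ?_⟩
  intro x y w hy hw hN
  by_contra hc
  push_neg at hc
  have hFC : F x y w < C := lt_of_lt_of_le hc (le_max_left _ _)
  have hterm1 : ∀ e ∈ E, 0 ≤ (1/2 : ℝ) * huber (D e) ‖x e.1 - x e.2 - y e‖ := by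
    intro e he
    have := huber_nonneg (t := ‖x e.1 - x e.2 - y e‖) (le_of_lt (hD e he))
    linarith
  have hterm2 : ∀ k ∈ K, 0 ≤ (1/2 : ℝ) * huber (R k) ‖x k.1 - a k.2 - w k‖ := by
    intro k hk
    have := huber_nonneg (t := ‖x k.1 - a k.2 - w k‖) (le_of_lt (hR k hk))
    linarith
  have hsum1 : ∀ e ∈ E, (1/2:ℝ) * huber (D e) ‖x e.1 - x e.2 - y e‖ ≤ F x y w := by
    intro e he
    rw [hF]
    have h1 := Finset.single_le_sum hterm1 he
    have h2 := Finset.sum_nonneg hterm2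
    linarith
  have hsum2 : (1/2:ℝ) * huber (R k0) ‖x k0.1 - a k0.2 - w k0‖ ≤ F x y w := by
    rw [hF]
    have h1 := Finset.sum_nonneg hterm1
    have h2 := Finset.single_le_sum hterm2 hk0
    linarith
  have hedge : ∀ e ∈ E, ‖x e.1 - x e.2‖ ≤ (C + (D e) ^ 2 / 2) / (D e) + |d e| := by
    intro e he
    have hDe := hD e he
    have hlb := huber_lb (δ := D e) (t := ‖x e.1 - x e.2 - y e‖)
    have habs : |‖x e.1 - x e.2 - y e‖| = ‖x e.1 - x e.2 - y e‖ := abs_of_nonneg (norm_nonneg _)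
    rw [habs] at hlb
    have h1 := hsum1 e he
    have ht : ‖x e.1 - x e.2 - y e‖ ≤ (C + (D e) ^ 2 / 2) / (D e) := by
      rw [le_div_iff₀ hDe]
      nlinarith
    have h2 : ‖x e.1 - x e.2‖ ≤ ‖x e.1 - x e.2 - y e‖ + ‖y e‖ := by
      have := norm_add_le (x e.1 - x e.2 - y e) (y e)
      simpa using this
    have h3 : ‖y e‖ ≤ |d e| := le_trans (hy e he) (le_abs_self _)
    linarith
  have hanchor : ‖x k0.1 - a k0.2‖ ≤ A := by
    have hRk := hR k0 hk0
    have hlb := huber_lb (δ := R k0) (t := ‖x k0.1 - a k0.2 - w k0‖)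
    have habs : |‖x k0.1 - a k0.2 - w k0‖| = ‖x k0.1 - a k0.2 - w k0‖ :=
      abs_of_nonneg (norm_nonneg _)
    rw [habs] at hlb
    have ht : ‖x k0.1 - a k0.2 - w k0‖ ≤ (C + (R k0) ^ 2 / 2) / (R k0) := by
      rw [le_div_iff₀ hRk]
      nlinarith [hsum2]
    have h2 : ‖x k0.1 - a k0.2‖ ≤ ‖x k0.1 - a k0.2 - w k0‖ + ‖w k0‖ := by
      have := norm_add_le (x k0.1 - a k0.2 - w k0) (w k0)
      simpa using this
    have h3 : ‖w k0‖ ≤ |r k0| := le_trans (hw k0 hk0) (le_abs_self _)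
    rw [hAdef]
    linarith
  have hadj : ∀ u v, (SimpleGraph.fromRel (fun i j : V => (i, j) ∈ E)).Adj u v →
      ‖x u - x v‖ ≤ B := by
    intro u v huv
    obtain ⟨-, h | h⟩ := huv
    · exact le_trans (hedge (u, v) h) (Finset.single_le_sum hBterm h)
    · rw [norm_sub_rev]
      exact le_trans (hedge (v, u) h) (Finset.single_le_sum hBterm h)
  have hnode : ∀ i, ‖x i‖ ≤ ‖a k0.2‖ + A + (Fintype.card V) * B := by
    intro i
    obtain ⟨wlk⟩ := hconn.preconnected i k0.1
    obtain ⟨pw, hpw⟩ := wlk.toPath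
    have hlen : pw.length < Fintype.card V := hpw.length_lt
    have hwb := walk_norm_bound hadj pw
    have hd : ‖x i - x k0.1‖ ≤ (Fintype.card V) * B := by
      refine le_trans hwb ?_
      apply mul_le_mul_of_nonneg_right _ hB0
      exact_mod_cast hlen.le
    have heq : x i = (x i - x k0.1) + ((x k0.1 - a k0.2) + a k0.2) := by abel
    calc ‖x i‖ = ‖(x i - x k0.1) + ((x k0.1 - a k0.2) + a k0.2)‖ := by rw [← heq]
      _ ≤ ‖x i - x k0.1‖ + ‖(x k0.1 - a k0.2) + a k0.2‖ := norm_add_le _ _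
      _ ≤ ‖x i - x k0.1‖ + (‖x k0.1 - a k0.2‖ + ‖a k0.2‖) := by
          have := norm_add_le (x k0.1 - a k0.2) (a k0.2); linarith
      _ ≤ ‖a k0.2‖ + A + (Fintype.card V) * B := by linarith [hanchor, hd]
  have hxle : ‖x‖ ≤ ‖a k0.2‖ + A + (Fintype.card V) * B := by
    have hnn : 0 ≤ ‖a k0.2‖ + A + (Fintype.card V) * B := by
      have h1 := norm_nonneg (a k0.2)
      have h2 : (0:ℝ) ≤ (Fintype.card V : ℝ) * B :=
        mul_nonneg (Nat.cast_nonneg _) hB0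
      linarith
    exact (pi_norm_le_iff_of_nonneg hnn).mpr hnode
  linarith
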